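/- arXiv:2004.14139 — 2 statements merged into one kernel-verified Lean document; each statement's English description precedes it below -/
import Mathlib

section
/- Let q ≥ 2 and ν > 0, and let c be sufficiently large in terms of q and n sufficiently large in terms of c. Let (A,B) be a (q,ν,n,c)-good pair in a graph G, and set p = c·n^{−1+1/q}. Then for every B' ⊆ B with |B'| < n/c^{q+2}, the number of vertices v ∈ A for which there exists some 1 ≤ k ≤ q−1 with |N^k_G(v) ∩ B'| ≥ (np)^k / c^{q+1} is at most n^{1−1/(2q)}. -/
open Finset Filter
open scoped Classical

/-- A vertex `v ∈ A` is `(A, B, q, ν)`-expanding in `G`: at least `(1 - ν)|A|` vertices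
`w ∈ A` are joined to `v` by a path of length `q` all of whose internal vertices lie in `B`. -/
def IsExpandingVertex {α : Type*} (G : SimpleGraph α) (A B : Finset α) (q : ℕ) (ν : ℝ)
    (v : α) : Prop :=
  (1 - ν) * A.card ≤
    ((A.filter fun w => ∃ P : G.Walk v w, P.IsPath ∧ P.length = q ∧
        ∀ x ∈ P.support, x ≠ v → x ≠ w → x ∈ B).card : ℝ)

/-- The pair `(A, B)` is `(q, ν, n, c)`-good in `G[A ∪ B]`, with `p = c·n^{-1+1/q}`:
`A`, `B` are disjoint, `|A| = n`, every vertex of `A` is `(A,B,q,ν)`-expanding,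
`Δ(G[A ∪ B]) < 2np`, and for every `B' ⊆ A ∪ B` with `|B'| < n/c^{q+2}` at most
`n^{1-1/(2q)}/q` vertices `v ∈ A ∪ B` have `|N_{B'}(v)| ≥ 2np/c^{q+3/2}`. -/
def IsGoodPair {α : Type*} (G : SimpleGraph α) (A B : Finset α) (q n : ℕ) (ν c : ℝ) : Prop :=
  Disjoint A B ∧
  A.card = n ∧
  (∀ v ∈ A, IsExpandingVertex G A B q ν v) ∧
  (∀ v ∈ A ∪ B, (((A ∪ B).filter fun w => G.Adj v w).card : ℝ)
      < 2 * n * (c * (n : ℝ) ^ (-1 + 1 / (q : ℝ)))) ∧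
  (∀ B' ⊆ A ∪ B, (B'.card : ℝ) < (n : ℝ) / c ^ (q + 2) →
    (((A ∪ B).filter fun v =>
        2 * n * (c * (n : ℝ) ^ (-1 + 1 / (q : ℝ))) / c ^ ((q : ℝ) + 3 / 2)
          ≤ ((B'.filter fun w => G.Adj v w).card : ℝ)).card : ℝ)
      ≤ (n : ℝ) ^ (1 - 1 / (2 * (q : ℝ))) / q)

/-- The `k`-th neighborhood of `v` in `G`: vertices reachable from `v` by walks of
length exactly `k`. -/
noncomputable def kthNbhd {α : Type*} [Fintype α] [DecidableEq α] (G : SimpleGraph α)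
    (v : α) : ℕ → Finset α
  | 0 => {v}
  | k + 1 => Finset.univ.filter fun w => ∃ u ∈ kthNbhd G v k, G.Adj u w

/-- The iterated sets `X_k`: `X_1` is the set of vertices with more than `d` neighbors
in `B'`, and `X_{k+1}` is the set of vertices with more than `d` neighbors in `X_k`. -/
noncomputable def iterX {α : Type*} [Fintype α] (G : SimpleGraph α) (B' : Finset α)
    (d : ℝ) : ℕ → Finset α
  | 0 => B'
  | k + 1 => Finset.univ.filter fun v => d < (((iterX G B' d k).filter fun w => G.Adj v w).card : ℝ)

/-!
Let `D = 2np` bound the degrees and `d = D / c^{q+3/2}`. Put `X_0 = B'` and let `X_{k+1}` be the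
set of vertices with more than `d` neighbours in `X_k`; applying the sparseness condition of a good
pair again and again keeps every `X_k` with `k ≥ 1` of size at most `n^{1-1/(2q)}/q`. A vertex
outside `X_k` has at most `k d D^{k-1}` vertices of `B'` in its `k`-th neighbourhood: at most `d`
of its neighbours lie in `X_{k-1}`, each reaching at most `D^{k-1}` vertices, and the at most `D`
others are handled by induction. As `k d D^{k-1} = k 2^k (np)^k / c^{q+3/2}` is below
`(np)^k / c^{q+1}` once `√c > q 2^q`, every vertex counted lies in one of `X_1, …, X_{q-1}`.
-/

section KthNeighborhood

variable {α : Type*} [Fintype α] [DecidableEq α] (G : SimpleGraph α)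

lemma mem_kthNbhd_succ {v w : α} {k : ℕ} :
    w ∈ kthNbhd G v (k + 1) ↔ ∃ u ∈ kthNbhd G v k, G.Adj u w := by
  simp [kthNbhd]

lemma mem_kthNbhd_succ' {v w : α} {k : ℕ} :
    w ∈ kthNbhd G v (k + 1) ↔ ∃ u, G.Adj v u ∧ w ∈ kthNbhd G u k := by
  induction k generalizing w with
  | zero => simp [kthNbhd]
  | succ k ih =>
    simp only [mem_kthNbhd_succ G (k := k + 1), ih, mem_kthNbhd_succ G (k := k)]
    aesop

lemma card_kthNbhd_le {D : ℝ} (hD : 0 ≤ D)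
    (hdeg : ∀ v, (#(univ.filter (G.Adj v)) : ℝ) ≤ D) (v : α) (k : ℕ) :
    (#(kthNbhd G v k) : ℝ) ≤ D ^ k := by
  induction k with
  | zero => simp [kthNbhd]
  | succ k ih =>
    have hsub : kthNbhd G v (k + 1) ⊆ (kthNbhd G v k).biUnion (fun u => univ.filter (G.Adj u)) :=
      fun w hw => by simpa using (mem_kthNbhd_succ G).1 hw
    calc (#(kthNbhd G v (k + 1)) : ℝ)
        ≤ ∑ u ∈ kthNbhd G v k, (#(univ.filter (G.Adj u)) : ℝ) := by
          exact_mod_cast (card_le_card hsub).trans card_biUnion_le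
      _ ≤ #(kthNbhd G v k) * D := by
          simpa using sum_le_sum fun u _ => hdeg u
      _ ≤ D ^ (k + 1) := by
          rw [pow_succ]; gcongr

end KthNeighborhood

section IteratedSets

variable {α : Type*} [Fintype α] (G : SimpleGraph α) (B' : Finset α) (d : ℝ)

lemma mem_iterX_succ {v : α} {k : ℕ} :
    v ∈ iterX G B' d (k + 1) ↔ d < #((iterX G B' d k).filter (G.Adj v)) := by
  simp [iterX]

lemma card_iterX_succ_le {M m : ℝ} (hB' : (#B' : ℝ) < M) (hm : m < M)
    (hsparse : ∀ S : Finset α, (#S : ℝ) < M →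
      (#(univ.filter fun v => d < #(S.filter (G.Adj v))) : ℝ) ≤ m) (j : ℕ) :
    (#(iterX G B' d (j + 1)) : ℝ) ≤ m := by
  induction j with
  | zero => exact hsparse B' hB'
  | succ j ih => exact hsparse _ (ih.trans_lt hm)

end IteratedSets

section WalkCount

variable {α : Type*} [Fintype α] [DecidableEq α] (G : SimpleGraph α) (B' : Finset α) (d : ℝ)

lemma card_kthNbhd_inter_le_of_not_mem_iterX {D : ℝ} (hD : 0 ≤ D)
    (hdeg : ∀ v, (#(univ.filter (G.Adj v)) : ℝ) ≤ D) (k : ℕ) {v : α}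
    (hv : v ∉ iterX G B' d (k + 1)) :
    (#(kthNbhd G v (k + 1) ∩ B') : ℝ) ≤ (k + 1) * d * D ^ k := by
  induction k generalizing v with
  | zero =>
    have hsub : kthNbhd G v 1 ∩ B' ⊆ B'.filter (G.Adj v) := fun w hw => by
      simp only [mem_inter, mem_kthNbhd_succ'] at hw
      obtain ⟨⟨u, hvu, hu⟩, hw⟩ := hw
      simp only [kthNbhd, mem_singleton] at hu
      exact mem_filter.2 ⟨hw, hu ▸ hvu⟩
    have hv' : (#(B'.filter (G.Adj v)) : ℝ) ≤ d := not_lt.1 ((mem_iterX_succ G B' d).not.1 hv)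
    simpa using (Nat.cast_le.2 (card_le_card hsub)).trans hv'
  | succ k ih =>
    set X := iterX G B' d (k + 1)
    set N := univ.filter (G.Adj v)
    have hXv : (#(X.filter (G.Adj v)) : ℝ) ≤ d := not_lt.1 ((mem_iterX_succ G B' d).not.1 hv)
    have hd : 0 ≤ d := (Nat.cast_nonneg _).trans hXv
    have hsub : kthNbhd G v (k + 2) ∩ B' ⊆ N.biUnion fun u => kthNbhd G u (k + 1) ∩ B' :=
      fun w hw => by
        obtain ⟨hw, hwB⟩ := mem_inter.1 hw
        obtain ⟨u, hvu, hw⟩ := (mem_kthNbhd_succ' G).1 hw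
        exact mem_biUnion.2 ⟨u, by simpa [N] using hvu, mem_inter.2 ⟨hw, hwB⟩⟩
    have hNX : (#(N.filter (· ∈ X)) : ℝ) ≤ d :=
      le_trans (Nat.cast_le.2 (card_le_card fun u hu => by simp_all [N])) hXv
    have hN : (#(N.filter (· ∉ X)) : ℝ) ≤ D :=
      (Nat.cast_le.2 (card_le_card (filter_subset _ _))).trans (hdeg v)
    calc (#(kthNbhd G v (k + 2) ∩ B') : ℝ)
        ≤ ∑ u ∈ N, (#(kthNbhd G u (k + 1) ∩ B') : ℝ) := by
          exact_mod_cast (card_le_card hsub).trans card_biUnion_le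
      _ = ∑ u ∈ N.filter (· ∈ X), (#(kthNbhd G u (k + 1) ∩ B') : ℝ)
          + ∑ u ∈ N.filter (· ∉ X), (#(kthNbhd G u (k + 1) ∩ B') : ℝ) :=
          (sum_filter_add_sum_filter_not _ _ _).symm
      _ ≤ ∑ u ∈ N.filter (· ∈ X), D ^ (k + 1)
          + ∑ u ∈ N.filter (· ∉ X), (k + 1) * d * D ^ k := by
          gcongr with u _ u hu
          · exact (Nat.cast_le.2 (card_le_card inter_subset_left)).trans
              (card_kthNbhd_le G hD hdeg u _)
          · exact ih (mem_filter.1 hu).2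
      _ ≤ d * D ^ (k + 1) + D * ((k + 1) * d * D ^ k) := by
          simp only [sum_const, nsmul_eq_mul]
          gcongr
      _ = (↑(k + 1) + 1) * d * D ^ (k + 1) := by push_cast; ring

end WalkCount

lemma card_filter_exists_le_card_kthNbhd_inter_le {α : Type*} [Fintype α] [DecidableEq α]
    (G : SimpleGraph α) (B' : Finset α) {d D m : ℝ} (hD : 0 ≤ D)
    (hdeg : ∀ v, (#(univ.filter (G.Adj v)) : ℝ) ≤ D) {K : ℕ}
    (hX : ∀ j < K, (#(iterX G B' d (j + 1)) : ℝ) ≤ m) (t : ℕ → ℝ)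
    (ht : ∀ j < K, (j + 1) * d * D ^ j < t (j + 1)) (S : Finset α) :
    (#(S.filter fun v => ∃ k, 1 ≤ k ∧ k ≤ K ∧ t k ≤ #(kthNbhd G v k ∩ B')) : ℝ) ≤ K * m := by
  have hsub : (S.filter fun v => ∃ k, 1 ≤ k ∧ k ≤ K ∧ t k ≤ #(kthNbhd G v k ∩ B')) ⊆
      (range K).biUnion fun j => iterX G B' d (j + 1) := by
    intro v hv
    obtain ⟨-, k, hk1, hkK, hvk⟩ := mem_filter.1 hv
    obtain ⟨j, rfl⟩ := Nat.exists_eq_add_of_le' hk1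
    refine mem_biUnion.2 ⟨j, mem_range.2 (by omega), ?_⟩
    by_contra hv
    have := card_kthNbhd_inter_le_of_not_mem_iterX G B' d hD hdeg j hv
    linarith [ht j (by omega)]
  calc (#(S.filter fun v => ∃ k, 1 ≤ k ∧ k ≤ K ∧ t k ≤ #(kthNbhd G v k ∩ B')) : ℝ)
      ≤ ∑ j ∈ range K, (#(iterX G B' d (j + 1)) : ℝ) := by
        exact_mod_cast (card_le_card hsub).trans card_biUnion_le
    _ ≤ ∑ _j ∈ range K, m := sum_le_sum fun j hj => hX j (mem_range.1 hj)
    _ = K * m := by simp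

lemma rpow_one_sub_inv_lt_div {x C : ℝ} {m : ℕ} (hm : m ≠ 0) (hC : 0 < C) (h : C ^ m < x) :
    x ^ (1 - (m : ℝ)⁻¹) < x / C := by
  have hx : 0 < x := (pow_pos hC m).trans h
  have hroot : C < x ^ (m : ℝ)⁻¹ := by
    calc C = (C ^ m) ^ (m : ℝ)⁻¹ := (Real.pow_rpow_inv_natCast hC.le hm).symm
      _ < x ^ (m : ℝ)⁻¹ := by gcongr
  rw [Real.rpow_sub hx, Real.rpow_one]
  gcongr

lemma mul_div_rpow_mul_pow_lt {x c : ℝ} (hx : 0 < x) (hc : 0 < c) (e j : ℕ)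
    (hj : ((j : ℝ) + 1) * 2 ^ (j + 1) < √c) :
    (j + 1) * (2 * x / c ^ ((e : ℝ) + 3 / 2)) * (2 * x) ^ j < x ^ (j + 1) / c ^ (e + 1) := by
  have hsplit : c ^ ((e : ℝ) + 3 / 2) = c ^ (e + 1) * √c := by
    rw [Real.sqrt_eq_rpow, ← Real.rpow_natCast, ← Real.rpow_add hc]
    push_cast; ring_nf
  have hsqrt : 0 < √c := Real.sqrt_pos.2 hc
  calc (j + 1) * (2 * x / c ^ ((e : ℝ) + 3 / 2)) * (2 * x) ^ j
      = ((j + 1) * 2 ^ (j + 1) / √c) * (x ^ (j + 1) / c ^ (e + 1)) := by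
        rw [hsplit]; field_simp; ring
    _ < 1 * (x ^ (j + 1) / c ^ (e + 1)) := by
        gcongr; exact (div_lt_one hsqrt).2 hj
    _ = x ^ (j + 1) / c ^ (e + 1) := one_mul _

theorem stmt6_general (q : ℕ) (hq : 2 ≤ q) (ν : ℝ) :
    ∃ c₀ : ℝ, ∀ c : ℝ, c₀ ≤ c → ∃ n₀ : ℕ, ∀ n : ℕ, n₀ ≤ n →
      ∀ (α : Type*) [Fintype α] [DecidableEq α] (G : SimpleGraph α) (A B : Finset α),
        A ∪ B = Finset.univ →
        IsGoodPair G A B q n ν c →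
        ∀ B' ⊆ B, (B'.card : ℝ) < (n : ℝ) / c ^ (q + 2) →
          ((A.filter fun v => ∃ k : ℕ, 1 ≤ k ∧ k ≤ q - 1 ∧
              ((n : ℝ) * (c * (n : ℝ) ^ (-1 + 1 / (q : ℝ)))) ^ k / c ^ (q + 1)
                ≤ ((kthNbhd G v k ∩ B').card : ℝ)).card : ℝ)
            ≤ (n : ℝ) ^ (1 - 1 / (2 * (q : ℝ))) := by
  refine ⟨(q * 2 ^ q) ^ 2 + 1, fun c hc => ⟨⌈(c ^ (q + 2)) ^ (2 * q)⌉₊ + 1, fun n hn => ?_⟩⟩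
  intro α _ _ G A B hAB hgood B' _ hB'
  obtain ⟨-, -, -, hdeg, hsparse⟩ := hgood
  -- `IsGoodPair` was elaborated with the classical `DecidableEq` instance.
  have hU : @Union.union _ (@instUnion α fun a b => Classical.propDecidable (a = b)) A B = univ := by
    convert hAB
  rw [hU] at hdeg hsparse
  have hc0 : 0 < c := lt_of_lt_of_le (by positivity) hc
  have hcq : (q : ℝ) * 2 ^ q < √c := Real.lt_sqrt_of_sq_lt (by linarith)
  have hnc : (c ^ (q + 2)) ^ (2 * q) < n := Nat.lt_of_ceil_lt (by omega)
  have hn0 : (0 : ℝ) < n := (by positivity : (0 : ℝ) ≤ _).trans_lt hnc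
  have hq0 : (1 : ℝ) ≤ q := by exact_mod_cast (by omega : 1 ≤ q)
  set p := c * (n : ℝ) ^ (-1 + 1 / (q : ℝ))
  set d := 2 * n * p / c ^ ((q : ℝ) + 3 / 2)
  set s := (n : ℝ) ^ (1 - 1 / (2 * (q : ℝ)))
  have hx : 0 < (n : ℝ) * p := by positivity
  have hs : s / q < n / c ^ (q + 2) := by
    refine (div_le_self (by positivity) hq0).trans_lt ?_
    have := rpow_one_sub_inv_lt_div (by omega) (by positivity) hnc
    rwa [Nat.cast_mul, Nat.cast_two, ← one_div] at this
  calc _ ≤ ((q - 1 : ℕ) : ℝ) * (s / q) := by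
        refine card_filter_exists_le_card_kthNbhd_inter_le G B' (d := d) (D := 2 * n * p)
          (by positivity) (fun v => (hdeg v (mem_univ v)).le)
          (fun j _ => card_iterX_succ_le G B' _ hB' hs (fun S hS => ?_) j) _ (fun j hj => ?_) A
        · exact (Nat.cast_le.2 (card_le_card (monotone_filter_right _ fun v _ => le_of_lt))).trans
            (hsparse S (subset_univ S) hS)
        · have hjq : ((j : ℝ) + 1) * 2 ^ (j + 1) ≤ q * 2 ^ q := by
            gcongr
            · exact_mod_cast (by omega : j + 1 ≤ q)
            · norm_num
            · omega
          convert mul_div_rpow_mul_pow_lt hx hc0 q j (hjq.trans_lt hcq) using 3 <;> ring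
    _ ≤ q * (s / q) := by gcongr; exact_mod_cast Nat.sub_le q 1
    _ = s := mul_div_cancel₀ s (by positivity)

theorem stmt6 (q : ℕ) (hq : 2 ≤ q) (ν : ℝ) (hν : 0 < ν) :
    ∃ c₀ : ℝ, ∀ c : ℝ, c₀ ≤ c → ∃ n₀ : ℕ, ∀ n : ℕ, n₀ ≤ n →
      ∀ (α : Type*) [Fintype α] [DecidableEq α] (G : SimpleGraph α) (A B : Finset α),
        A ∪ B = Finset.univ →
        IsGoodPair G A B q n ν c →
        ∀ B' ⊆ B, (B'.card : ℝ) < (n : ℝ) / c ^ (q + 2) →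
          ((A.filter fun v => ∃ k : ℕ, 1 ≤ k ∧ k ≤ q - 1 ∧
              ((n : ℝ) * (c * (n : ℝ) ^ (-1 + 1 / (q : ℝ)))) ^ k / c ^ (q + 1)
                ≤ ((kthNbhd G v k ∩ B').card : ℝ)).card : ℝ)
            ≤ (n : ℝ) ^ (1 - 1 / (2 * (q : ℝ))) :=
  stmt6_general q hq ν
end

section
/- Let G be a graph with maximum degree Δ(G) < Δ, let B' ⊆ V(G), let d > 0, and define iteratively X₁ = {v ∈ V(G) : |N_{B'}(v)| > d} and X_{i+1} = {v ∈ V(G) : |N_{X_i}(v)| > d} for i ≥ 1. Then for every k ≥ 1 and every vertex v ∉ X_k, the number of vertices of B' reachable from v by walks of length exactly k satisfies |N^k_G(v) ∩ B'| ≤ Σ_{i=1}^{k} Δ^{i−1}·d·Δ^{k−i} = k·d·Δ^{k−1}. -/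
/-!
A walk of length `k + 1` from `v` to `B'` starts with an edge to a neighbour `w`, so
`|N^{k+1}(v) ∩ B'|` is at most the sum of `|N^k(w) ∩ B'|` over the neighbours `w` of `v`.
Since `v ∉ X_{k+1}`, at most `d` of these neighbours lie in `X_k`, and each of them
contributes at most `|N^k(w)| ≤ Δ^k`; each of the at most `Δ` other neighbours
contributes at most `k d Δ^{k-1}` by induction. Hence `|N^{k+1}(v) ∩ B'| ≤ (k + 1) d Δ^k`.
-/

open Finset Filter
open scoped Classical

namespace SimpleGraph

variable {α : Type*} [Fintype α] [DecidableEq α] (G : SimpleGraph α)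

theorem kthNbhd_succ_eq_biUnion (v : α) (k : ℕ) :
    kthNbhd G v (k + 1) = (G.neighborFinset v).biUnion fun w => kthNbhd G w k := by
  induction k generalizing v with
  | zero => ext w; simp [kthNbhd]
  | succ k ih =>
    ext w
    rw [kthNbhd, ih]
    simp only [mem_filter, mem_univ, true_and, mem_biUnion, mem_neighborFinset, kthNbhd]
    tauto

theorem card_kthNbhd_succ_inter_le (S : Finset α) (v : α) (k : ℕ) :
    #(kthNbhd G v (k + 1) ∩ S) ≤ ∑ w ∈ G.neighborFinset v, #(kthNbhd G w k ∩ S) := by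
  rw [kthNbhd_succ_eq_biUnion, biUnion_inter]
  exact card_biUnion_le

variable {G} {Δ : ℝ} (hΔ : ∀ v, (G.degree v : ℝ) ≤ Δ)
include hΔ

theorem card_kthNbhd_le_pow (v : α) (k : ℕ) : (#(kthNbhd G v k) : ℝ) ≤ Δ ^ k := by
  induction k generalizing v with
  | zero => simp [kthNbhd]
  | succ k ih =>
    have hΔ0 : 0 ≤ Δ := (Nat.cast_nonneg _).trans (hΔ v)
    calc (#(kthNbhd G v (k + 1)) : ℝ)
        ≤ ∑ w ∈ G.neighborFinset v, (#(kthNbhd G w k) : ℝ) := by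
          simpa using (Nat.cast_le (α := ℝ)).2 (card_kthNbhd_succ_inter_le G univ v k)
      _ ≤ G.degree v * Δ ^ k := by
          rw [← card_neighborFinset_eq_degree, ← nsmul_eq_mul]
          exact sum_le_card_nsmul _ _ _ fun w _ => ih w
      _ ≤ Δ ^ (k + 1) := by
          rw [pow_succ']
          exact mul_le_mul_of_nonneg_right (hΔ v) (pow_nonneg hΔ0 k)

theorem card_kthNbhd_inter_le_of_notMem_iterX (B' : Finset α) (d : ℝ) (k : ℕ) (v : α)
    (hv : v ∉ iterX G B' d k) :
    (#(kthNbhd G v k ∩ B') : ℝ) ≤ k * d * Δ ^ (k - 1) := by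
  induction k generalizing v with
  | zero =>
    rw [iterX] at hv
    simp [kthNbhd, singleton_inter_of_notMem hv]
  | succ k ih =>
    set X := iterX G B' d k
    have hX : (#((G.neighborFinset v).filter (· ∈ X)) : ℝ) ≤ d := by
      have hfilter : (G.neighborFinset v).filter (· ∈ X) = X.filter (G.Adj v ·) := by
        ext w; simp [and_comm]
      simpa [iterX, hfilter] using hv
    have hd : 0 ≤ d := (Nat.cast_nonneg _).trans hX
    have hΔ0 : 0 ≤ Δ := (Nat.cast_nonneg _).trans (hΔ v)
    have hin : ∑ w ∈ (G.neighborFinset v).filter (· ∈ X), (#(kthNbhd G w k ∩ B') : ℝ)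
        ≤ d * Δ ^ k := by
      refine (sum_le_card_nsmul _ _ (Δ ^ k) fun w _ => ?_).trans ?_
      · exact (Nat.cast_le.2 (card_le_card inter_subset_left)).trans
          (card_kthNbhd_le_pow hΔ w k)
      · rw [nsmul_eq_mul]
        exact mul_le_mul_of_nonneg_right hX (pow_nonneg hΔ0 k)
    have hout : ∑ w ∈ (G.neighborFinset v).filter (· ∉ X), (#(kthNbhd G w k ∩ B') : ℝ)
        ≤ Δ * (k * d * Δ ^ (k - 1)) := by
      refine (sum_le_card_nsmul _ _ _ fun w hw => ih w (mem_filter.1 hw).2).trans ?_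
      rw [nsmul_eq_mul]
      refine mul_le_mul_of_nonneg_right ?_ (by positivity)
      exact (Nat.cast_le.2 (card_filter_le _ _)).trans (by simpa using hΔ v)
    have hpow : Δ * (k * d * Δ ^ (k - 1)) = k * d * Δ ^ k := by
      cases k with
      | zero => simp
      | succ k => simp only [Nat.add_sub_cancel, pow_succ]; ring
    calc (#(kthNbhd G v (k + 1) ∩ B') : ℝ)
        ≤ ∑ w ∈ G.neighborFinset v, (#(kthNbhd G w k ∩ B') : ℝ) := by
          exact_mod_cast card_kthNbhd_succ_inter_le G B' v k
      _ ≤ d * Δ ^ k + Δ * (k * d * Δ ^ (k - 1)) := by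
          rw [← sum_filter_add_sum_filter_not _ (· ∈ X)]
          exact add_le_add hin hout
      _ = (k + 1 : ℕ) * d * Δ ^ (k + 1 - 1) := by
          rw [hpow, Nat.add_sub_cancel]; push_cast; ring

end SimpleGraph

theorem Finset.sum_Icc_pow_mul_mul_pow {R : Type*} [CommSemiring R] (a d : R) (k : ℕ) :
    ∑ i ∈ Icc 1 k, a ^ (i - 1) * d * a ^ (k - i) = k * d * a ^ (k - 1) := by
  rw [sum_congr rfl (g := fun _ => d * a ^ (k - 1)), sum_const, Nat.card_Icc, nsmul_eq_mul,
    Nat.add_sub_cancel, mul_assoc]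
  intro i hi
  rw [mem_Icc] at hi
  rw [mul_right_comm, mul_comm, ← pow_add]
  congr 2
  omega

theorem stmt8_general {α : Type*} [Fintype α] [DecidableEq α] (G : SimpleGraph α) (Δ : ℝ)
    (hΔ : ∀ v : α, ((G.neighborSet v).ncard : ℝ) < Δ)
    (B' : Finset α) (d : ℝ) (k : ℕ)
    (v : α) (hv : v ∉ iterX G B' d k) :
    ((kthNbhd G v k ∩ B').card : ℝ) ≤ ∑ i ∈ Finset.Icc 1 k, Δ ^ (i - 1) * d * Δ ^ (k - i) ∧
    ∑ i ∈ Finset.Icc 1 k, Δ ^ (i - 1) * d * Δ ^ (k - i) = k * d * Δ ^ (k - 1) := by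
  have hdeg : ∀ w, (G.degree w : ℝ) ≤ Δ := fun w => by
    rw [← G.card_neighborFinset_eq_degree, SimpleGraph.neighborFinset,
      ← Set.ncard_eq_toFinset_card']
    exact (hΔ w).le
  rw [Finset.sum_Icc_pow_mul_mul_pow]
  exact ⟨G.card_kthNbhd_inter_le_of_notMem_iterX hdeg B' d k v hv, rfl⟩

theorem stmt8 {α : Type*} [Fintype α] [DecidableEq α] (G : SimpleGraph α) (Δ : ℝ)
    (hΔ : ∀ v : α, ((G.neighborSet v).ncard : ℝ) < Δ)
    (B' : Finset α) (d : ℝ) (hd : 0 < d) (k : ℕ) (hk : 1 ≤ k)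
    (v : α) (hv : v ∉ iterX G B' d k) :
    ((kthNbhd G v k ∩ B').card : ℝ) ≤ ∑ i ∈ Finset.Icc 1 k, Δ ^ (i - 1) * d * Δ ^ (k - i) ∧
    ∑ i ∈ Finset.Icc 1 k, Δ ^ (i - 1) * d * Δ ^ (k - i) = k * d * Δ ^ (k - 1) :=
  stmt8_general G Δ hΔ B' d k v hv
end
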